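/- arXiv:1707.03888 — 2 statements merged into one kernel-verified Lean document; each statement's English description precedes it below -/
import Mathlib

section
/- Let p, c ≥ 1 be integers, let G be a graph with at least 2 vertices, let H_0 be a graph with χ(H_0) = c, and let H be the p-blowup of H_0. Then the tree-like product satisfies χ(T(G,H)) ≤ c · χ(G). -/
open SimpleGraph

/-- `F` is a minor of `G`: branch decomposition formulation. -/
def IsMinor {α : Type*} {β : Type*} (F : SimpleGraph α) (G : SimpleGraph β) : Prop :=
  ∃ f : α → Set β,
    (∀ a, (f a).Nonempty) ∧
    (∀ a, (G.induce (f a)).Connected) ∧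
    (∀ a a', a ≠ a' → Disjoint (f a) (f a')) ∧
    ∀ ⦃a a'⦄, F.Adj a a' → ∃ x ∈ f a, ∃ y ∈ f a', G.Adj x y

/-- Planarity, via Wagner's characterization. -/
def IsPlanar {β : Type*} (G : SimpleGraph β) : Prop :=
  ¬ IsMinor (⊤ : SimpleGraph (Fin 5)) G ∧
  ¬ IsMinor (completeBipartiteGraph (Fin 3) (Fin 3)) G

/-- `G` is `t`-apex: deleting at most `t` vertices leaves a planar graph. -/
def IsApex (t : ℕ) {β : Type*} (G : SimpleGraph β) : Prop :=
  ∃ X : Set β, X.Finite ∧ X.ncard ≤ t ∧ IsPlanar (G.induce Xᶜ)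

/-- `G` is `k`-connected. -/
def IsKConnected (k : ℕ) {β : Type*} [Fintype β] (G : SimpleGraph β) : Prop :=
  k < Fintype.card β ∧
  ∀ X : Finset β, X.card < k → (G.induce ((↑X : Set β)ᶜ)).Connected

/-- Vertices of the tree-like product `T(G,H)`: a vertex of the copy `G_x`
is encoded by the path from the root to the non-leaf tree vertex `x`
(a sequence of vertices of `G` of length `< k`) together with a vertex of `G`. -/
abbrev TPVert (V : Type*) (k : ℕ) : Type _ := (Σ i : Fin k, (Fin i → V)) × V

/-- The tree-like product `T(G,H)` of `G` with a graph `H` on the ordered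
vertex set `Fin k`. -/
def treeProd {V : Type*} (G : SimpleGraph V) {k : ℕ} (H : SimpleGraph (Fin k)) :
    SimpleGraph (TPVert V k) :=
  SimpleGraph.fromRel (fun a b =>
    (a.1 = b.1 ∧ G.Adj a.2 b.2) ∨
    (∃ hij : (a.1.1 : ℕ) < (b.1.1 : ℕ),
      (∀ t : Fin a.1.1, a.1.2 t = b.1.2 ⟨t, t.2.trans hij⟩) ∧
      a.2 = b.1.2 ⟨a.1.1, hij⟩ ∧
      H.Adj a.1.1 b.1.1))

/-- The `p`-blowup of a graph on `Fin m`, with the blowup classes consecutive. -/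
def blowupFin {m : ℕ} (H0 : SimpleGraph (Fin m)) (p : ℕ) : SimpleGraph (Fin (m * p)) where
  Adj i j := ∃ (hi : (i : ℕ) / p < m) (hj : (j : ℕ) / p < m),
    H0.Adj ⟨(i : ℕ) / p, hi⟩ ⟨(j : ℕ) / p, hj⟩
  symm := by constructor; rintro i j ⟨hi, hj, h⟩; exact ⟨hj, hi, h.symm⟩
  loopless := by constructor; rintro i ⟨hi, hj, h⟩; exact H0.loopless.irrefl _ h

/-- The strong `p`-blowup of a graph. -/
def strongBlowup {W : Type*} (H0 : SimpleGraph W) (p : ℕ) : SimpleGraph (W × Fin p) where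
  Adj a b := H0.Adj a.1 b.1 ∨ (a.1 = b.1 ∧ a.2 ≠ b.2)
  symm := by
    constructor
    rintro a b (h | ⟨h1, h2⟩)
    · exact Or.inl h.symm
    · exact Or.inr ⟨h1.symm, h2.symm⟩
  loopless := by constructor; rintro a (h | ⟨_, h⟩); exact H0.loopless.irrefl _ h; exact h rfl

/-- An `(a : b)`-coloring of `G`. -/
def HasFracColoring {W : Type*} (G : SimpleGraph W) (a b : ℕ) : Prop :=
  ∃ f : W → Finset (Fin a), (∀ w, (f w).card = b) ∧
    ∀ ⦃x y⦄, G.Adj x y → Disjoint (f x) (f y)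

/-- The fractional chromatic number. -/
noncomputable def fracChrom {W : Type*} (G : SimpleGraph W) : ℝ :=
  sInf {q : ℝ | ∃ a b : ℕ, 0 < b ∧ HasFracColoring G a b ∧ q = (a : ℝ) / (b : ℝ)}

/-!
Every edge of `T(G,H)` either lies inside a copy of `G` or joins two vertices whose levels are
adjacent in `H`, so `T(G,H)` is a subgraph of the union of the pullbacks of `G` and `H` along
"vertex of `G`" and "level". A union of two graphs is colored by pairs of colors, and the
`p`-blowup of `H0` maps homomorphically onto `H0`.
-/

namespace SimpleGraph

variable {V α β : Type*} {G₁ G₂ : SimpleGraph V}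

def Coloring.sup (C₁ : G₁.Coloring α) (C₂ : G₂.Coloring β) : (G₁ ⊔ G₂).Coloring (α × β) :=
  Coloring.mk (fun v => (C₁ v, C₂ v)) fun h heq =>
    h.elim (fun h₁ => C₁.valid h₁ (congrArg Prod.fst heq))
      (fun h₂ => C₂.valid h₂ (congrArg Prod.snd heq))

theorem Colorable.sup {a b : ℕ} (h₁ : G₁.Colorable a) (h₂ : G₂.Colorable b) :
    (G₁ ⊔ G₂).Colorable (a * b) := by
  simpa using (h₁.some.sup h₂.some).colorable

theorem chromaticNumber_sup_le_mul (G₁ G₂ : SimpleGraph V) :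
    (G₁ ⊔ G₂).chromaticNumber ≤ G₁.chromaticNumber * G₂.chromaticNumber := by
  rcases isEmpty_or_nonempty V with hV | hV
  · simp [chromaticNumber_eq_zero_of_isEmpty]
  by_cases htop : G₁.chromaticNumber = ⊤ ∨ G₂.chromaticNumber = ⊤
  · have hpos : ∀ G : SimpleGraph V, G.chromaticNumber ≠ 0 := fun G h =>
      (not_isEmpty_of_nonempty V) (chromaticNumber_eq_zero_iff.1 h)
    rcases htop with h | h <;> simp [h, hpos]
  obtain ⟨h₁, h₂⟩ := not_or.1 htop
  rw [← ENat.natCast_toNat h₁, ← ENat.natCast_toNat h₂, ← Nat.cast_mul,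
    chromaticNumber_le_iff_colorable]
  exact (colorable_of_chromaticNumber_ne_top h₁).sup (colorable_of_chromaticNumber_ne_top h₂)

theorem chromaticNumber_comap_le {W : Type*} (f : V → W) (G : SimpleGraph W) :
    (G.comap f).chromaticNumber ≤ G.chromaticNumber :=
  chromaticNumber_mono_of_hom (Hom.comap f G)

end SimpleGraph

theorem treeProd_le_sup_comap {V : Type*} (G : SimpleGraph V) {k : ℕ} (H : SimpleGraph (Fin k)) :
    treeProd G H ≤ H.comap (fun a : TPVert V k => a.1.1) ⊔ G.comap Prod.snd := by
  rintro a b ⟨-, (⟨-, hG⟩ | ⟨-, -, -, hH⟩) | (⟨-, hG⟩ | ⟨-, -, -, hH⟩)⟩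
  exacts [Or.inr hG, Or.inl hH, Or.inr hG.symm, Or.inl hH.symm]

def blowupFinProj (m p : ℕ) (i : Fin (m * p)) : Fin m :=
  ⟨i / p, Nat.div_lt_of_lt_mul (by simp [Nat.mul_comm])⟩

theorem blowupFin_eq_comap {m : ℕ} (H0 : SimpleGraph (Fin m)) (p : ℕ) :
    blowupFin H0 p = H0.comap (blowupFinProj m p) := by
  ext i j
  exact ⟨fun ⟨_, _, h⟩ => h, fun h => ⟨_, _, h⟩⟩

theorem chromaticNumber_blowupFin_le {m : ℕ} (H0 : SimpleGraph (Fin m)) (p : ℕ) :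
    (blowupFin H0 p).chromaticNumber ≤ H0.chromaticNumber := by
  rw [blowupFin_eq_comap]
  exact chromaticNumber_comap_le _ _

theorem treeProd_blowup_chromatic_le_general {V : Type}
    (G : SimpleGraph V)
    (p c : ℕ)
    {m : ℕ} (H0 : SimpleGraph (Fin m)) (hchi : H0.chromaticNumber = c) :
    (treeProd G (blowupFin H0 p)).chromaticNumber ≤ (c : ℕ∞) * G.chromaticNumber := by
  calc (treeProd G (blowupFin H0 p)).chromaticNumber
      ≤ ((blowupFin H0 p).comap (fun a : TPVert V (m * p) => a.1.1) ⊔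
          G.comap Prod.snd).chromaticNumber :=
        chromaticNumber_mono _ (treeProd_le_sup_comap G _)
    _ ≤ ((blowupFin H0 p).comap (fun a : TPVert V (m * p) => a.1.1)).chromaticNumber *
          (G.comap Prod.snd).chromaticNumber :=
        chromaticNumber_sup_le_mul _ _
    _ ≤ H0.chromaticNumber * G.chromaticNumber := by
        gcongr
        · exact (chromaticNumber_comap_le _ _).trans
            (chromaticNumber_blowupFin_le H0 p)
        · exact chromaticNumber_comap_le _ _
    _ = c * G.chromaticNumber := by rw [hchi]

theorem treeProd_blowup_chromatic_le {V : Type} [Fintype V] [DecidableEq V]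
    (G : SimpleGraph V) (hn : 2 ≤ Fintype.card V)
    (p c : ℕ) (hp : 1 ≤ p) (hc : 1 ≤ c)
    {m : ℕ} (H0 : SimpleGraph (Fin m)) (hchi : H0.chromaticNumber = c) :
    (treeProd G (blowupFin H0 p)).chromaticNumber ≤ (c : ℕ∞) * G.chromaticNumber :=
  treeProd_blowup_chromatic_le_general G p c H0 hchi
end

section
/- Let G_0 be a planar graph with n ≥ 2 vertices, let k_0 be a positive integer, and let G = T(G_0, K_{k_0×4}) be the tree-like product of G_0 with the complete k_0-partite graph with parts of size 4. If G_0 is 3-colorable, then χ(G) ≤ 3k_0; and if G_0 is not 3-colorable, then χ(G) ≥ 4k_0. -/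
open SimpleGraph

/-!
A proper coloring of `G` paired with a proper coloring of the level in `H` colors `T(G, H)`,
which gives the upper bound `3 k₀`.

For the lower bound, build a root-to-leaf branch greedily. At level `j`, the copy `G_x` of `G`
uses at least `4` colors since `G` is not `3`-colorable, while the earlier branch vertices in
the same part of `K_{k₀×4}` carry at most `3` colors; pick a vertex of `G_x` with a new color.
Branch vertices in different parts are adjacent in `T(G, H)`, so the `4 k₀` branch vertices
get pairwise distinct colors.
-/

open Finset

namespace SimpleGraph.Coloring

variable {V α : Type*} {G : SimpleGraph V}

theorem exists_apply_notMem_of_not_colorable {d : ℕ} (hG : ¬ G.Colorable d)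
    (c : G.Coloring α) (S : Finset α) (hS : #S ≤ d) : ∃ v, c v ∉ S := by
  by_contra! hcS
  have cS : G.Coloring S := Coloring.mk (fun v => ⟨c v, hcS v⟩)
    fun h he => c.valid h (congrArg Subtype.val he)
  exact hG ((Fintype.card_coe S ▸ cS.colorable).mono hS)

end SimpleGraph.Coloring

namespace treeProd

variable {V : Type*} {G : SimpleGraph V} {k : ℕ} {H : SimpleGraph (Fin k)}

def copyHom (x : Σ i : Fin k, (Fin i → V)) : G →g treeProd G H where
  toFun v := (x, v)
  map_rel' h := ⟨fun he => G.ne_of_adj h (congrArg Prod.snd he), Or.inl (Or.inl ⟨rfl, h⟩)⟩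

def coloringProd {α β : Type*} (cG : G.Coloring α) (cH : H.Coloring β) :
    (treeProd G H).Coloring (α × β) :=
  Coloring.mk (fun a => (cG a.2, cH a.1.1)) <| by
    rintro a b ⟨-, (⟨-, h⟩ | ⟨-, -, -, h⟩) | (⟨-, h⟩ | ⟨-, -, -, h⟩)⟩ he
    · exact cG.valid h (congrArg Prod.fst he)
    · exact cH.valid h (congrArg Prod.snd he)
    · exact cG.valid h (congrArg Prod.fst he).symm
    · exact cH.valid h (congrArg Prod.snd he).symm

theorem colorable_mul {a b : ℕ} (hG : G.Colorable a) (hH : H.Colorable b) :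
    (treeProd G H).Colorable (a * b) := by
  obtain ⟨cG⟩ := hG
  obtain ⟨cH⟩ := hH
  simpa using (coloringProd cG cH).colorable

/-- The vertex at level `j` on the branch of `T_{n,k}` that follows `p`: it lies in the copy
indexed by `p 0, …, p (j - 1)` and is that copy's vertex `p j`. -/
def branchVert (p : ℕ → V) (j : Fin k) : TPVert V k := (⟨j, fun t => p t⟩, p j)

theorem branchVert_congr {p q : ℕ → V} {j : Fin k} (h : ∀ t ≤ (j : ℕ), p t = q t) :
    branchVert p j = branchVert q j := by
  have hlt : (fun t : Fin j => p t) = fun t : Fin j => q t := funext fun t => h t t.2.le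
  simp only [branchVert, hlt, h j le_rfl]

theorem adj_branchVert (p : ℕ → V) {i j : Fin k} (hij : i < j) (h : H.Adj i j) :
    (treeProd G H).Adj (branchVert p i) (branchVert p j) :=
  ⟨fun he => hij.ne (congrArg (fun x => x.1.1) he), Or.inl (Or.inr ⟨hij, fun _ => rfl, rfl, h⟩)⟩

variable [DecidableRel H.Adj] {d : ℕ} {α : Type*} (c : (treeProd G H).Coloring α)

def BranchColoredUpTo (m : ℕ) (p : ℕ → V) : Prop :=
  ∀ i j : Fin k, i < j → (j : ℕ) < m → ¬ H.Adj i j → c (branchVert p i) ≠ c (branchVert p j)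

theorem exists_branchColoredUpTo_succ (hG : ¬ G.Colorable d)
    (hH : ∀ j, #{i | i < j ∧ ¬ H.Adj i j} ≤ d) {m : ℕ} (hm : m < k) {p : ℕ → V}
    (hp : BranchColoredUpTo c m p) : ∃ v, BranchColoredUpTo c (m + 1) (Function.update p m v) := by
  classical
  set j : Fin k := ⟨m, hm⟩
  obtain ⟨v, hv⟩ := Coloring.exists_apply_notMem_of_not_colorable hG
    (c.comp (copyHom ⟨j, fun t => p t⟩)) (image (c ∘ branchVert p) {i | i < j ∧ ¬ H.Adj i j})
    (card_image_le.trans (hH j))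
  have below : ∀ i : Fin k, (i : ℕ) < m → branchVert (Function.update p m v) i = branchVert p i :=
    fun i hi => branchVert_congr fun t ht => Function.update_of_ne (by omega) _ _
  have top : branchVert (Function.update p m v) j = (⟨j, fun t => p t⟩, v) :=
    Prod.ext (congrArg (Sigma.mk j) (funext fun t => Function.update_of_ne t.2.ne _ _))
      (Function.update_self _ _ _)
  refine ⟨v, fun i j' hij hj' hnadj => ?_⟩
  rw [below i (by omega)]
  rcases (Nat.lt_succ_iff_lt_or_eq.1 hj') with hj' | hj'
  · rw [below j' hj']
    exact hp i j' hij hj' hnadj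
  · obtain rfl : j' = j := Fin.ext hj'
    rw [top]
    exact fun he => hv (mem_image.2 ⟨i, mem_filter.2 ⟨mem_univ _, hij, hnadj⟩, he⟩)

theorem exists_branch_injective (hG : ¬ G.Colorable d)
    (hH : ∀ j, #{i | i < j ∧ ¬ H.Adj i j} ≤ d) : ∃ p : ℕ → V, (c ∘ branchVert p).Injective := by
  have : Nonempty V := not_isEmpty_iff.1 fun _ => hG (.of_isEmpty d)
  have hgood : ∀ m, ∃ p, BranchColoredUpTo c m p := by
    intro m
    induction m with
    | zero => exact ⟨fun _ => Classical.arbitrary V, fun _ j _ hj => absurd hj j.val.not_lt_zero⟩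
    | succ m ih =>
      obtain ⟨p, hp⟩ := ih
      by_cases hm : m < k
      · obtain ⟨v, hv⟩ := exists_branchColoredUpTo_succ c hG hH hm hp
        exact ⟨_, hv⟩
      · exact ⟨p, fun i j hij hj => hp i j hij (by omega)⟩
  obtain ⟨p, hp⟩ := hgood k
  refine ⟨p, Function.Injective.of_lt_imp_ne fun i j hij => ?_⟩
  by_cases h : H.Adj i j
  · exact c.valid (adj_branchVert p hij h)
  · exact hp i j hij j.2 h

theorem card_le_chromaticNumber (hG : ¬ G.Colorable d)
    (hH : ∀ j, #{i | i < j ∧ ¬ H.Adj i j} ≤ d) : (k : ℕ∞) ≤ (treeProd G H).chromaticNumber := by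
  refine le_chromaticNumber_iff_coloring.2 fun n c => ?_
  obtain ⟨p, hp⟩ := exists_branch_injective c hG hH
  simpa using Fintype.card_le_of_injective _ hp

end treeProd

namespace blowupFin

variable {m p : ℕ}

theorem colorable {H0 : SimpleGraph (Fin m)} {b : ℕ} (h : H0.Colorable b) :
    (blowupFin H0 p).Colorable b := by
  obtain ⟨c⟩ := h
  exact ⟨Coloring.mk (fun i => c ⟨i / p, Nat.div_lt_of_lt_mul (mul_comm m p ▸ i.2)⟩)
    fun ⟨_, _, h⟩ => c.valid h⟩

theorem card_earlier_nonadj_top_le [DecidableRel (blowupFin (⊤ : SimpleGraph (Fin m)) p).Adj]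
    (j : Fin (m * p)) :
    #{i | i < j ∧ ¬ (blowupFin (⊤ : SimpleGraph (Fin m)) p).Adj i j} ≤ p - 1 := by
  have hp : 0 < p := Nat.pos_of_ne_zero fun hp => absurd j.2 (by simp [hp])
  have same_part : ∀ i : Fin (m * p), ¬ (blowupFin ⊤ p).Adj i j → (i : ℕ) / p = j / p := by
    intro i h
    by_contra hne
    exact h ⟨Nat.div_lt_of_lt_mul (mul_comm m p ▸ i.2),
      Nat.div_lt_of_lt_mul (mul_comm m p ▸ j.2), fun he => hne (congrArg Fin.val he)⟩
  calc #{i | i < j ∧ ¬ (blowupFin (⊤ : SimpleGraph (Fin m)) p).Adj i j}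
      ≤ #(range (j % p)) := by
        refine card_le_card_of_injOn (fun i => (i : ℕ) % p) ?_ ?_
        · intro i hi
          simp only [coe_filter, mem_univ, true_and, Set.mem_ofPred_eq] at hi
          have : (i : ℕ) < j := hi.1
          have := same_part i hi.2 ▸ Nat.div_add_mod i p
          have := Nat.div_add_mod j p
          simp only [coe_range, Set.mem_Iio]
          omega
        · intro i hi i' hi' he
          simp only [coe_filter, mem_univ, true_and, Set.mem_ofPred_eq] at hi hi'
          have := same_part i hi.2 ▸ Nat.div_add_mod i p
          have := same_part i' hi'.2 ▸ Nat.div_add_mod i' p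
          have : (i : ℕ) % p = i' % p := he
          exact Fin.ext (by omega)
    _ ≤ p - 1 := by rw [card_range]; exact Nat.le_sub_one_of_lt (Nat.mod_lt _ hp)

end blowupFin

theorem treeProd_planar_chromatic_general {V : Type} (G0 : SimpleGraph V) (k0 : ℕ) :
    (G0.Colorable 3 →
      (treeProd G0 (blowupFin (⊤ : SimpleGraph (Fin k0)) 4)).chromaticNumber
        ≤ ((3 * k0 : ℕ) : ℕ∞)) ∧
    (¬ G0.Colorable 3 →
      ((4 * k0 : ℕ) : ℕ∞)
        ≤ (treeProd G0 (blowupFin (⊤ : SimpleGraph (Fin k0)) 4)).chromaticNumber) := by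
  refine ⟨fun hG => ?_, fun hG => ?_⟩
  · have hK : (⊤ : SimpleGraph (Fin k0)).Colorable k0 := by
      simpa using colorable_of_fintype (⊤ : SimpleGraph (Fin k0))
    exact (treeProd.colorable_mul hG (blowupFin.colorable hK)).chromaticNumber_le
  · classical
    rw [mul_comm]
    exact treeProd.card_le_chromaticNumber hG blowupFin.card_earlier_nonadj_top_le

theorem treeProd_planar_chromatic {V : Type} [Fintype V] [DecidableEq V]
    (G0 : SimpleGraph V) (hplanar : IsPlanar G0) (hn : 2 ≤ Fintype.card V)
    (k0 : ℕ) (hk0 : 1 ≤ k0) :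
    (G0.Colorable 3 →
      (treeProd G0 (blowupFin (⊤ : SimpleGraph (Fin k0)) 4)).chromaticNumber
        ≤ ((3 * k0 : ℕ) : ℕ∞)) ∧
    (¬ G0.Colorable 3 →
      ((4 * k0 : ℕ) : ℕ∞)
        ≤ (treeProd G0 (blowupFin (⊤ : SimpleGraph (Fin k0)) 4)).chromaticNumber) :=
  treeProd_planar_chromatic_general G0 k0
end
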